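/- Let F = Σ_{k≥0} x^{(2k+1)^2} ∈ (Z/2)[[x]] and G = F(x^3). The conjugates of F over (Z/2)(G) inside a suitable extension of the Laurent series field are F(x^9) and F(rx) for the three cube roots of unity r in the field of 4 elements adjoined appropriately; in particular F(x^9) is a root of X^4 + G X + G^4 over (Z/2)(G). -/

import Mathlib

open scoped Classical

noncomputable def F : PowerSeries (ZMod 2) :=
  PowerSeries.mk fun n => if ∃ k, n = (2 * k + 1) ^ 2 then 1 else 0

/-- `G = F(x^3)`. -/
noncomputable def G : PowerSeries (ZMod 2) :=
  PowerSeries.mk fun n => if ∃ k, n = 3 * (2 * k + 1) ^ 2 then 1 else 0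

/-- `F(x^9)`. -/
noncomputable def F9 : PowerSeries (ZMod 2) :=
  PowerSeries.mk fun n => if ∃ k, n = 9 * (2 * k + 1) ^ 2 then 1 else 0

/-!
Write `θ_c = ∑ₖ x^(c(2k+1)²)` over `𝔽₂`, so that `G = θ_3` and `F(x^9) = θ_9`. The coefficient of
`xⁿ` in `θ_c θ_d` is the parity of the number of representations `n = c a² + d b²` with `a, b` odd,
and an involution of this set of representations changes its parity only by its fixed points.
Swapping `a` and `b` gives `θ_c² = θ_{2c}`. For `d = 3c`, multiplying `a + b√-3` by a suitable
sixth root of unity is an involution of the odd representations of `a² + 3b²` whose fixed points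
are `a = b` and `a = 3b`; hence `θ_c θ_{3c} = θ_{4c} + θ_{12c} = θ_c⁴ + θ_{3c}⁴`, and `c = 3`
gives the theorem.
-/

open Finset PowerSeries

theorem Finset.cast_card_eq_cast_card_filter_fixed_of_involutive {α : Type*} [DecidableEq α]
    (s : Finset α) (f : α → α) (hs : ∀ x ∈ s, f x ∈ s) (hf : ∀ x ∈ s, f (f x) = x) :
    (#s : ZMod 2) = #{x ∈ s | f x = x} := by
  have hmoved : ∑ x ∈ s with ¬f x = x, (1 : ZMod 2) = 0 := by
    refine sum_involution (fun x _ => f x) (fun _ _ => CharTwo.add_self_eq_zero 1)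
      (fun x hx _ => (mem_filter.mp hx).2) (fun x hx => ?_)
      (fun x hx => hf x (mem_filter.mp hx).1)
    obtain ⟨hxs, hfx⟩ := mem_filter.mp hx
    exact mem_filter.mpr ⟨hs x hxs, fun h => hfx (by rw [← h, hf x hxs])⟩
  rw [cast_card, cast_card, ← sum_filter_add_sum_filter_not s (fun x => f x = x), hmoved,
    add_zero]

instance PowerSeries.charP {R : Type*} [CommSemiring R] (p : ℕ) [CharP R p] : CharP R⟦X⟧ p :=
  charP_of_injective_ringHom C_injective p

noncomputable def oddSquareSeries (c : ℕ) : PowerSeries (ZMod 2) :=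
  PowerSeries.mk fun n => if ∃ k, n = c * (2 * k + 1) ^ 2 then 1 else 0

def oddReps (c d n : ℕ) : Finset (ℕ × ℕ) :=
  {p ∈ range (n + 1) ×ˢ range (n + 1) | Odd p.1 ∧ Odd p.2 ∧ c * p.1 ^ 2 + d * p.2 ^ 2 = n}

section OddReps

variable {c d n : ℕ}

theorem mem_oddReps (hc : 0 < c) (hd : 0 < d) {p : ℕ × ℕ} :
    p ∈ oddReps c d n ↔ Odd p.1 ∧ Odd p.2 ∧ c * p.1 ^ 2 + d * p.2 ^ 2 = n := by
  refine ⟨fun h => (mem_filter.mp h).2, fun h => mem_filter.mpr ⟨?_, h⟩⟩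
  obtain ⟨-, -, hn⟩ := h
  have h1 : p.1 ≤ c * p.1 ^ 2 :=
    (Nat.le_self_pow two_ne_zero _).trans (Nat.le_mul_of_pos_left _ hc)
  have h2 : p.2 ≤ d * p.2 ^ 2 :=
    (Nat.le_self_pow two_ne_zero _).trans (Nat.le_mul_of_pos_left _ hd)
  simp only [mem_product, mem_range]
  omega

theorem coeff_oddSquareSeries_mul (hc : 0 < c) (hd : 0 < d) :
    coeff n (oddSquareSeries c * oddSquareSeries d) = #(oddReps c d n) := by
  simp only [oddSquareSeries, coeff_mul, coeff_mk, ite_zero_mul_ite_zero, one_mul, sum_boole]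
  congr 1
  refine (card_bij (fun p _ => (c * p.1 ^ 2, d * p.2 ^ 2)) ?_ ?_ ?_).symm
  · intro p hp
    obtain ⟨⟨k, hk⟩, ⟨l, hl⟩, hn⟩ := (mem_oddReps hc hd).mp hp
    simp only [mem_filter, HasAntidiagonal.mem_antidiagonal]
    exact ⟨hn, ⟨k, hk ▸ rfl⟩, ⟨l, hl ▸ rfl⟩⟩
  · intro p _ q _ h
    simp only [Prod.mk.injEq, Nat.mul_left_cancel_iff hc, Nat.mul_left_cancel_iff hd] at h
    exact Prod.ext (Nat.pow_left_injective two_ne_zero h.1)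
      (Nat.pow_left_injective two_ne_zero h.2)
  · rintro ⟨i, j⟩ h
    simp only [mem_filter, HasAntidiagonal.mem_antidiagonal] at h
    obtain ⟨hn, ⟨k, rfl⟩, ⟨l, rfl⟩⟩ := h
    exact ⟨(2 * k + 1, 2 * l + 1),
      (mem_oddReps hc hd).mpr ⟨odd_two_mul_add_one k, odd_two_mul_add_one l, hn⟩, rfl⟩

theorem cast_card_filter_fst_eq_mul_snd (hc : 0 < c) (hd : 0 < d) {m : ℕ} (hm : Odd m) :
    (#{p ∈ oddReps c d n | p.1 = m * p.2} : ZMod 2) =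
      coeff n (oddSquareSeries (c * m ^ 2 + d)) := by
  rw [oddSquareSeries, coeff_mk]
  split_ifs with h
  · obtain ⟨k, rfl⟩ := h
    rw [card_eq_one.mpr ⟨(m * (2 * k + 1), 2 * k + 1), ?_⟩, Nat.cast_one]
    ext ⟨a, b⟩
    simp only [mem_filter, mem_oddReps hc hd, mem_singleton, Prod.mk.injEq]
    constructor
    · rintro ⟨⟨-, -, hn⟩, rfl⟩
      have hb : b ^ 2 = (2 * k + 1) ^ 2 :=
        Nat.eq_of_mul_eq_mul_left (by positivity : 0 < c * m ^ 2 + d) (by rw [← hn]; ring)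
      obtain rfl := Nat.pow_left_injective two_ne_zero hb
      exact ⟨rfl, rfl⟩
    · rintro ⟨rfl, rfl⟩
      exact ⟨⟨hm.mul (odd_two_mul_add_one k), odd_two_mul_add_one k, by ring⟩, rfl⟩
  · rw [card_eq_zero.mpr (filter_eq_empty_iff.mpr ?_), Nat.cast_zero]
    rintro ⟨a, b⟩ hp (rfl : a = m * b)
    obtain ⟨-, ⟨k, rfl⟩, hn⟩ := (mem_oddReps hc hd).mp hp
    exact h ⟨k, by rw [← hn]; ring⟩

end OddReps

theorem Int.sq_add_three_mul_sq_eq_of_two_mul {a b x y : ℤ}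
    (hx : (2 * x) ^ 2 = (a - 3 * b) ^ 2) (hy : (2 * y) ^ 2 = (a + b) ^ 2) :
    x ^ 2 + 3 * y ^ 2 = a ^ 2 + 3 * b ^ 2 :=
  mul_left_cancel₀ (four_ne_zero : (4 : ℤ) ≠ 0) (by linear_combination hx + 3 * hy)

/-- `a + b√-3` times `(1 + √-3)/2` or `(-1 + √-3)/2`, whichever keeps both coordinates odd,
with signs dropped. -/
def oddRotate (p : ℕ × ℕ) : ℕ × ℕ :=
  if p.1 % 4 = p.2 % 4 then (((p.1 : ℤ) - 3 * p.2).natAbs / 2, (p.1 + p.2) / 2)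
  else ((p.1 + 3 * p.2) / 2, ((p.1 : ℤ) - p.2).natAbs / 2)

section OddRotate

variable {p : ℕ × ℕ}

theorem odd_oddRotate (ha : Odd p.1) (hb : Odd p.2) :
    Odd (oddRotate p).1 ∧ Odd (oddRotate p).2 := by
  simp only [Nat.odd_iff] at *
  unfold oddRotate
  split_ifs <;> omega

theorem oddRotate_oddRotate (ha : Odd p.1) (hb : Odd p.2) : oddRotate (oddRotate p) = p := by
  simp only [Nat.odd_iff] at *
  unfold oddRotate
  split_ifs <;> simp only [Prod.ext_iff] at * <;> omega

theorem oddRotate_eq_self_iff (ha : Odd p.1) (hb : Odd p.2) :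
    oddRotate p = p ↔ p.1 = p.2 ∨ p.1 = 3 * p.2 := by
  simp only [Nat.odd_iff] at *
  unfold oddRotate
  split_ifs <;> simp only [Prod.ext_iff] <;> omega

theorem sq_add_three_mul_sq_oddRotate (ha : Odd p.1) (hb : Odd p.2) :
    (oddRotate p).1 ^ 2 + 3 * (oddRotate p).2 ^ 2 = p.1 ^ 2 + 3 * p.2 ^ 2 := by
  have sq_eq {u v : ℤ} (h : u = v ∨ u = -v) : u ^ 2 = v ^ 2 := by
    rcases h with rfl | rfl <;> ring
  obtain ⟨a, b⟩ := p
  simp only [Nat.odd_iff] at ha hb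
  rcases hxy : oddRotate (a, b) with ⟨x, y⟩
  have hlin : (((2 * x : ℤ) = a - 3 * b ∨ (2 * x : ℤ) = -(a - 3 * b)) ∧ (2 * y : ℤ) = a + b) ∨
      ((2 * x : ℤ) = a + 3 * b ∧ ((2 * y : ℤ) = a - b ∨ (2 * y : ℤ) = -(a - b))) := by
    unfold oddRotate at hxy
    split_ifs at hxy <;> simp only [Prod.mk.injEq] at hxy <;> omega
  zify
  rcases hlin with ⟨hx, hy⟩ | ⟨hx, hy⟩
  · exact Int.sq_add_three_mul_sq_eq_of_two_mul (sq_eq hx) (sq_eq (.inl hy))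
  · simpa using Int.sq_add_three_mul_sq_eq_of_two_mul (b := -b)
      (sq_eq (.inl (by rw [hx]; ring))) (sq_eq (by simpa only [← sub_eq_add_neg] using hy))

variable {c n : ℕ}

theorem oddRotate_mem_oddReps (hc : 0 < c) (hp : p ∈ oddReps c (3 * c) n) :
    oddRotate p ∈ oddReps c (3 * c) n := by
  obtain ⟨ha, hb, hn⟩ := (mem_oddReps hc (by omega)).mp hp
  refine (mem_oddReps hc (by omega)).mpr ⟨(odd_oddRotate ha hb).1, (odd_oddRotate ha hb).2, ?_⟩
  rw [← hn]
  linear_combination c * sq_add_three_mul_sq_oddRotate ha hb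

theorem filter_oddRotate_eq_self (hc : 0 < c) :
    {p ∈ oddReps c (3 * c) n | oddRotate p = p} =
      {p ∈ oddReps c (3 * c) n | p.1 = 1 * p.2} ∪ {p ∈ oddReps c (3 * c) n | p.1 = 3 * p.2} := by
  rw [← filter_or]
  refine filter_congr fun p hp => ?_
  obtain ⟨ha, hb, -⟩ := (mem_oddReps hc (by omega)).mp hp
  rw [oddRotate_eq_self_iff ha hb, one_mul]

end OddRotate

section OddSquareSeries

variable {c : ℕ}

theorem oddSquareSeries_sq (hc : 0 < c) : oddSquareSeries c ^ 2 = oddSquareSeries (2 * c) := by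
  ext n
  have hswap (p) (hp : p ∈ oddReps c c n) : p.swap ∈ oddReps c c n := by
    obtain ⟨ha, hb, hn⟩ := (mem_oddReps hc hc).mp hp
    exact (mem_oddReps hc hc).mpr ⟨hb, ha, by rw [← hn, Prod.fst_swap, Prod.snd_swap, add_comm]⟩
  rw [sq, coeff_oddSquareSeries_mul hc hc,
    cast_card_eq_cast_card_filter_fixed_of_involutive _ _ hswap (fun p _ => p.swap_swap),
    filter_congr (q := fun p : ℕ × ℕ => p.1 = 1 * p.2) (fun p _ => by simp [Prod.ext_iff, eq_comm]),
    cast_card_filter_fst_eq_mul_snd hc hc odd_one, one_pow, mul_one, two_mul]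

theorem oddSquareSeries_pow_four (hc : 0 < c) :
    oddSquareSeries c ^ 4 = oddSquareSeries (4 * c) := by
  rw [show 4 = 2 * 2 from rfl, pow_mul, oddSquareSeries_sq hc, oddSquareSeries_sq (by omega),
    ← mul_assoc]

theorem oddSquareSeries_mul_three_mul (hc : 0 < c) :
    oddSquareSeries c * oddSquareSeries (3 * c) =
      oddSquareSeries (4 * c) + oddSquareSeries (12 * c) := by
  have h3c : 0 < 3 * c := by omega
  ext n
  have hdisj : Disjoint {p ∈ oddReps c (3 * c) n | p.1 = 1 * p.2}
      {p ∈ oddReps c (3 * c) n | p.1 = 3 * p.2} := by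
    refine disjoint_filter.mpr fun p hp h1 h3 => ?_
    have := ((mem_oddReps hc h3c).mp hp).2.1.pos
    omega
  rw [coeff_oddSquareSeries_mul hc h3c,
    cast_card_eq_cast_card_filter_fixed_of_involutive _ _ (fun p => oddRotate_mem_oddReps hc)
      (fun p hp => oddRotate_oddRotate ((mem_oddReps hc h3c).mp hp).1
        ((mem_oddReps hc h3c).mp hp).2.1),
    filter_oddRotate_eq_self hc, card_union_of_disjoint hdisj, Nat.cast_add, map_add,
    cast_card_filter_fst_eq_mul_snd hc h3c odd_one,
    cast_card_filter_fst_eq_mul_snd hc h3c (by decide : Odd 3)]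
  congr 3 <;> ring

end OddSquareSeries

/-- `F(x^9)` is a conjugate of `F` over `(Z/2)(G)`: it is a root of
`X^4 + GX + G^4 = (X+G)^4 - XG` (char 2). -/
theorem stmt_9 : F9 ^ 4 + G * F9 + G ^ 4 = 0 := by
  have hG : G = oddSquareSeries 3 := rfl
  have hF9 : F9 = oddSquareSeries (3 * 3) := rfl
  rw [hG, hF9, oddSquareSeries_pow_four (by norm_num), oddSquareSeries_pow_four (by norm_num),
    oddSquareSeries_mul_three_mul (by norm_num), show 4 * (3 * 3) = 12 * 3 from rfl,
    add_comm (oddSquareSeries (4 * 3)), ← add_assoc, CharTwo.add_self_eq_zero, zero_add,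
    CharTwo.add_self_eq_zero]
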